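/- arXiv:1305.3443 — 3 statements merged into one kernel-verified Lean document; each statement's English description precedes it below -/
import Mathlib

section
/- Define C_min(d) = log d − (1 − 1/d) log(d+1) (logs base 2) for integers d ≥ 2. Then C_min(2) < C_min(3) < C_min(4) and C_min(d) > C_min(d+1) for all d ≥ 4; in particular C_min attains its maximum over integers d ≥ 2 at d = 4. -/
noncomputable def Cmin (d : ℕ) : ℝ :=
  Real.logb 2 d - (1 - 1 / (d : ℝ)) * Real.logb 2 ((d : ℝ) + 1)

/-!
Multiplying `Cmin d - Cmin (d + 1)` by `d (d + 1) log 2` gives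
`d² (log d + log (d + 2) - 2 log (d + 1)) + d (log d - log (d + 1)) + log (d + 1)`.
By `log t ≥ 1 - 1/t` the first term exceeds `-1` and the second is at least `-1`, so the
expression is positive once `log (d + 1) ≥ 2`, i.e. for `d ≥ 7`. Exponentiating the same
expression turns each comparison of neighbouring values into an inequality between natural
numbers, which settles `d = 2, …, 6` by computation.
-/

open Real

lemma one_sub_div_le_log_sub_log {a b : ℝ} (ha : 0 < a) (hb : 0 < b) :
    1 - b / a ≤ log a - log b := by
  simpa [log_div ha.ne' hb.ne'] using one_sub_inv_le_log_of_pos (div_pos ha hb)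

lemma two_lt_log_eight : 2 < log 8 := by
  rw [show (8 : ℝ) = 2 ^ 3 by norm_num, log_pow, Nat.cast_ofNat]
  linarith [log_two_gt_d9]

lemma log_second_difference_pos {x : ℝ} (hx : 7 ≤ x) :
    0 < x ^ 2 * (log x + log (x + 2) - 2 * log (x + 1)) + x * (log x - log (x + 1))
      + log (x + 1) := by
  have hx0 : 0 < x := by linarith
  have hfirst : -1 ≤ x * (log x - log (x + 1)) := by
    have h := mul_le_mul_of_nonneg_left
      (one_sub_div_le_log_sub_log hx0 (by linarith : 0 < x + 1)) hx0.le
    rwa [show x * (1 - (x + 1) / x) = -1 by field_simp; ring] at h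
  have hsecond : -1 < x ^ 2 * (log x + log (x + 2) - 2 * log (x + 1)) := by
    have h := mul_le_mul_of_nonneg_left
      (one_sub_div_le_log_sub_log (by positivity : 0 < x * (x + 2))
        (by positivity : 0 < (x + 1) ^ 2))
      (sq_nonneg x)
    rw [log_mul hx0.ne' (by positivity), log_pow,
      show x ^ 2 * (1 - (x + 1) ^ 2 / (x * (x + 2))) = -1 + 2 / (x + 2) by field_simp; ring] at h
    push_cast at h
    have : 0 < 2 / (x + 2) := by positivity
    linarith
  have hlog : 2 < log (x + 1) :=
    two_lt_log_eight.trans_le (log_le_log (by norm_num) (by linarith))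
  linarith

lemma mul_Cmin_sub_Cmin_succ {d : ℕ} (hd : 0 < d) :
    d * (d + 1) * log 2 * (Cmin d - Cmin (d + 1)) =
      d ^ 2 * (log d + log (d + 2) - 2 * log (d + 1)) + d * (log d - log (d + 1))
        + log (d + 1) := by
  have hd' : (d : ℝ) ≠ 0 := by positivity
  have hlog2 : log 2 ≠ 0 := by positivity
  simp only [Cmin, logb]
  push_cast
  rw [add_assoc, one_add_one_eq_two]
  field_simp
  ring

lemma log_sub_log_eq_mul_Cmin_sub_Cmin_succ {d : ℕ} (hd : 0 < d) :
    log (((d + 2) ^ d ^ 2 * d ^ (d * (d + 1)) * (d + 1) ^ (d + 1) : ℕ) : ℝ)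
        - log (((d + 1) ^ (2 * d * (d + 1)) : ℕ) : ℝ) =
      d * (d + 1) * log 2 * (Cmin d - Cmin (d + 1)) := by
  rw [mul_Cmin_sub_Cmin_succ hd]
  push_cast
  rw [log_mul (by positivity) (by positivity), log_mul (by positivity) (by positivity)]
  simp only [log_pow]
  push_cast
  ring

lemma Cmin_succ_lt_iff {d : ℕ} (hd : 0 < d) :
    Cmin (d + 1) < Cmin d ↔
      (d + 1) ^ (2 * d * (d + 1)) < (d + 2) ^ d ^ 2 * d ^ (d * (d + 1)) * (d + 1) ^ (d + 1) := by
  rw [← mul_lt_mul_iff_of_pos_left (by positivity : (0 : ℝ) < d * (d + 1) * log 2), ← sub_pos,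
    ← mul_sub, ← log_sub_log_eq_mul_Cmin_sub_Cmin_succ hd, sub_pos,
    log_lt_log_iff (by positivity) (by positivity), Nat.cast_lt]

lemma Cmin_lt_Cmin_succ_iff {d : ℕ} (hd : 0 < d) :
    Cmin d < Cmin (d + 1) ↔
      (d + 2) ^ d ^ 2 * d ^ (d * (d + 1)) * (d + 1) ^ (d + 1) < (d + 1) ^ (2 * d * (d + 1)) := by
  rw [← mul_lt_mul_iff_of_pos_left (by positivity : (0 : ℝ) < d * (d + 1) * log 2), ← sub_neg,
    ← mul_sub, ← log_sub_log_eq_mul_Cmin_sub_Cmin_succ hd, sub_neg,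
    log_lt_log_iff (by positivity) (by positivity), Nat.cast_lt]

lemma Cmin_succ_lt_of_four_le {d : ℕ} (hd : 4 ≤ d) : Cmin (d + 1) < Cmin d := by
  rcases lt_or_ge d 7 with hsmall | hlarge
  · rw [Cmin_succ_lt_iff (by omega)]
    interval_cases d <;> norm_num
  · have hpos := log_second_difference_pos (x := d) (by exact_mod_cast hlarge)
    rw [← mul_Cmin_sub_Cmin_succ (by omega)] at hpos
    exact sub_pos.mp (pos_of_mul_pos_right hpos (by positivity))

theorem cmin_max_at_four :
    Cmin 2 < Cmin 3 ∧ Cmin 3 < Cmin 4 ∧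
      (∀ d : ℕ, 4 ≤ d → Cmin d > Cmin (d + 1)) ∧
      (∀ d : ℕ, 2 ≤ d → Cmin d ≤ Cmin 4) := by
  have h23 : Cmin 2 < Cmin 3 := (Cmin_lt_Cmin_succ_iff two_pos).mpr (by norm_num)
  have h34 : Cmin 3 < Cmin 4 := (Cmin_lt_Cmin_succ_iff three_pos).mpr (by norm_num)
  have hanti : AntitoneOn Cmin {d | 4 ≤ d} :=
    antitoneOn_nat_Ici_of_succ_le fun d hd => (Cmin_succ_lt_of_four_le hd).le
  refine ⟨h23, h34, fun d hd => Cmin_succ_lt_of_four_le hd, fun d hd => ?_⟩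
  rcases lt_or_ge d 4 with hsmall | hlarge
  · interval_cases d
    · exact (h23.trans h34).le
    · exact h34.le
  · exact hanti (le_refl 4) hlarge hlarge
end

section
/- For all integers d ≥ 2, C_min(d) = log d − (1 − 1/d) log(d+1) > 0 (logs base 2). -/
theorem cmin_pos (d : ℕ) (hd : 2 ≤ d) :
    Real.logb 2 d - (1 - 1 / (d : ℝ)) * Real.logb 2 ((d : ℝ) + 1) > 0 := by
  set x : ℝ := (d : ℝ) with hxdef
  have hx : (2 : ℝ) ≤ x := by rw [hxdef]; exact_mod_cast hd
  have hx0 : (0 : ℝ) < x := by linarith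
  have h2 : (0 : ℝ) < Real.log 2 := Real.log_pos (by norm_num)
  -- decompose log(x+1)
  have hlog : Real.log (x + 1) = Real.log x + Real.log (1 + 1 / x) := by
    rw [← Real.log_mul (by linarith) (by positivity)]
    congr 1
    field_simp
  have hL : Real.log (1 + 1 / x) ≤ 1 / x := by
    have := Real.log_le_sub_one_of_pos (show (0 : ℝ) < 1 + 1 / x by positivity)
    linarith
  -- log x > 1 - 1/x
  have hgt : 1 - 1 / x < Real.log x := by
    rcases eq_or_lt_of_le hd with h | h
    · have hx2 : x = 2 := by rw [hxdef, ← h]; norm_num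
      rw [hx2]
      have := Real.log_two_gt_d9
      norm_num
      linarith
    · have hx3 : (3 : ℝ) ≤ x := by rw [hxdef]; exact_mod_cast h
      have h1 : (1 : ℝ) < Real.log x := by
        rw [Real.lt_log_iff_exp_lt hx0]
        calc Real.exp 1 < 2.7182818286 := Real.exp_one_lt_d9
          _ ≤ x := by linarith
      have : 1 / x > 0 := by positivity
      linarith
  have key : 0 < Real.log x - (1 - 1 / x) * Real.log (x + 1) := by
    rw [hlog]
    have hxinv : (0 : ℝ) < 1 / x := by positivity
    have hfrac : (0 : ℝ) ≤ 1 - 1 / x := by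
      have : 1 / x ≤ 1 / 2 := by
        apply div_le_div_of_nonneg_left <;> linarith
      linarith
    nlinarith [mul_lt_mul_of_pos_left hgt hxinv,
      mul_le_mul_of_nonneg_left hL hfrac]
  have hrw : Real.logb 2 x - (1 - 1 / x) * Real.logb 2 (x + 1)
      = (Real.log x - (1 - 1 / x) * Real.log (x + 1)) / Real.log 2 := by
    unfold Real.logb
    ring
  rw [hrw]
  exact div_pos key h2
end

section
/- For every d ≥ 2 and every C ∈ (0, log₂ d²), the noisy-channel fidelity exceeds the perfect-restricted-channel fidelity: if p₀₀ ∈ (1/d², 1) satisfies log d² + p₀₀ log p₀₀ + (1−p₀₀) log((1−p₀₀)/(d²−1)) = C, then p₀₀ > 2^C/d². -/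
theorem noisy_beats_perfect (d : ℕ) (hd : 2 ≤ d) (C : ℝ)
    (hC : C ∈ Set.Ioo 0 (Real.logb 2 ((d : ℝ) ^ 2)))
    (p₀₀ : ℝ) (hp : p₀₀ ∈ Set.Ioo (1 / (d : ℝ) ^ 2) 1)
    (hcap : Real.logb 2 ((d : ℝ) ^ 2) + p₀₀ * Real.logb 2 p₀₀ +
        (1 - p₀₀) * Real.logb 2 ((1 - p₀₀) / ((d : ℝ) ^ 2 - 1)) = C) :
    p₀₀ > (2 : ℝ) ^ C / (d : ℝ) ^ 2 := by
  obtain ⟨hp1, hp2⟩ := hp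
  set n : ℝ := (d:ℝ)^2 with hn
  have hd2 : (2:ℝ) ≤ d := by exact_mod_cast hd
  have hn4 : (4:ℝ) ≤ n := by nlinarith
  have hn0 : 0 < n := by linarith
  have hp0 : 0 < p₀₀ := lt_trans (by positivity) hp1
  set q : ℝ := (1 - p₀₀) / (n - 1) with hq
  have hq0 : 0 < q := by apply div_pos <;> linarith
  have hqp : q < p₀₀ := by
    rw [hq, div_lt_iff₀ (by linarith)]
    have h1 : 1 < p₀₀ * n := by
      rw [div_lt_iff₀ hn0] at hp1; linarith
    nlinarith
  have key : (2:ℝ) ^ C = n * (p₀₀ ^ p₀₀ * q ^ (1 - p₀₀)) := by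
    rw [← hcap, Real.rpow_add two_pos, Real.rpow_add two_pos,
        Real.rpow_logb two_pos (by norm_num) hn0,
        mul_comm p₀₀ (Real.logb 2 p₀₀), mul_comm (1 - p₀₀) (Real.logb 2 q),
        Real.rpow_mul (by norm_num), Real.rpow_mul (by norm_num),
        Real.rpow_logb two_pos (by norm_num) hp0,
        Real.rpow_logb two_pos (by norm_num) hq0]
    ring
  rw [gt_iff_lt, key, mul_div_cancel_left₀ _ hn0.ne']
  have hlt : p₀₀ ^ p₀₀ * q ^ (1 - p₀₀) < p₀₀ ^ p₀₀ * p₀₀ ^ (1 - p₀₀) :=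
    mul_lt_mul_of_pos_left (Real.rpow_lt_rpow hq0.le hqp (by linarith))
      (Real.rpow_pos_of_pos hp0 _)
  calc p₀₀ ^ p₀₀ * q ^ (1 - p₀₀) < p₀₀ ^ p₀₀ * p₀₀ ^ (1 - p₀₀) := hlt
    _ = p₀₀ := by rw [← Real.rpow_add hp0]; simp
end
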